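/- Gronwall-type uniqueness consequence: if ψ ∈ C¹([a,b]) is increasing with ψ′ > 0, α > 0, C ≥ 0, u: [a,b] → ℝ is continuous and non-negative, and u(t) ≤ C ∫ₐᵗ (ψ(t)−ψ(s))^{α−1} u(s) ψ′(s) ds for all t ∈ [a,b], then u ≡ 0 on [a,b]. -/

import Mathlib

open MeasureTheory Set

/-!
On an interval `[c, t]` the kernel `(ψ t - ψ s) ^ (α - 1) ψ' s` is the derivative of
`-(ψ t - ψ s) ^ α / α`, so it is integrable and its integral is `(ψ t - ψ c) ^ α / α`, which is
small when `t - c` is small, uniformly on `[a, b]`. Hence if `u` vanishes on `[a, c]` and `M` is its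
maximum on `[a, c + δ]`, the inequality gives `M ≤ q M` with `q < 1`, so `u` vanishes on
`[a, c + δ]`; finitely many such steps cover `[a, b]`.
-/

theorem Icc_subset_of_step {s : Set ℝ} {a b δ : ℝ} (hδ : 0 < δ) (ha : a ∈ s)
    (hstep : ∀ c ∈ Icc a b, Icc a c ⊆ s → Icc a (min (c + δ) b) ⊆ s) : Icc a b ⊆ s := by
  rcases lt_or_ge b a with hba | hab
  · simp [Icc_eq_empty_of_lt hba]
  have hn : ∀ n : ℕ, Icc a (min (a + n * δ) b) ⊆ s := by
    intro n
    induction n with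
    | zero => simpa [min_eq_left hab] using ha
    | succ n ih =>
      have hc : min (a + n * δ) b ∈ Icc a b :=
        ⟨le_min (le_add_of_nonneg_right (by positivity)) hab, min_le_right _ _⟩
      refine (Icc_subset_Icc_right ?_).trans (hstep _ hc ih)
      rw [← min_add_add_right]
      exact le_min (min_le_min (by push_cast; linarith) (by linarith)) (min_le_right _ _)
  obtain ⟨n, hn'⟩ := exists_nat_ge ((b - a) / δ)
  have hb : b ≤ a + n * δ := by
    rw [div_le_iff₀ hδ] at hn'
    linarith
  simpa [min_eq_right hb] using hn n

section

variable {ψ ψ' u : ℝ → ℝ} {α C a b c d t : ℝ}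

theorem hasDerivAt_neg_rpow_sub_div {s : ℝ} (hψ : HasDerivAt ψ (ψ' s) s) (hlt : ψ s < ψ t)
    (hα : α ≠ 0) :
    HasDerivAt (fun r => -((ψ t - ψ r) ^ α / α)) ((ψ t - ψ s) ^ (α - 1) * ψ' s) s := by
  refine (((hψ.const_sub (ψ t)).rpow_const (Or.inl (sub_pos.2 hlt).ne')).div_const α).neg
    |>.congr_deriv ?_
  field_simp

theorem continuousOn_neg_rpow_sub_div {s : Set ℝ} (hα : 0 ≤ α) (hψ : ContinuousOn ψ s) :
    ContinuousOn (fun r => -((ψ t - ψ r) ^ α / α)) s :=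
  ((continuousOn_const.sub hψ).rpow_const fun _ _ => Or.inr hα).div_const α |>.neg

theorem intervalIntegrable_rpow_sub_mul_deriv (hct : c ≤ t) (hα : 0 < α)
    (hψ : ∀ s ∈ Icc c t, HasDerivAt ψ (ψ' s) s) (hψ' : ∀ s ∈ Icc c t, 0 ≤ ψ' s)
    (hmono : StrictMonoOn ψ (Icc c t)) :
    IntervalIntegrable (fun s => (ψ t - ψ s) ^ (α - 1) * ψ' s) volume c t := by
  rw [intervalIntegrable_iff_integrableOn_Ioc_of_le hct]
  refine intervalIntegral.integrableOn_deriv_of_nonneg (continuousOn_neg_rpow_sub_div hα.le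
    (continuousOn_of_forall_continuousAt fun s hs => (hψ s hs).continuousAt))
    (fun s hs => hasDerivAt_neg_rpow_sub_div (hψ s (Ioo_subset_Icc_self hs))
      (hmono (Ioo_subset_Icc_self hs) (right_mem_Icc.2 hct) hs.2) hα.ne') fun s hs => ?_
  have hs' := Ioo_subset_Icc_self hs
  exact mul_nonneg (Real.rpow_nonneg (sub_nonneg.2 (hmono.monotoneOn hs' (right_mem_Icc.2 hct)
    hs.2.le)) _) (hψ' s hs')

theorem integral_rpow_sub_mul_deriv (hct : c ≤ t) (hα : 0 < α)
    (hψ : ∀ s ∈ Icc c t, HasDerivAt ψ (ψ' s) s) (hψ' : ∀ s ∈ Icc c t, 0 ≤ ψ' s)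
    (hmono : StrictMonoOn ψ (Icc c t)) :
    ∫ s in c..t, (ψ t - ψ s) ^ (α - 1) * ψ' s = (ψ t - ψ c) ^ α / α := by
  rw [intervalIntegral.integral_eq_sub_of_hasDerivAt_of_le hct (continuousOn_neg_rpow_sub_div
    hα.le (continuousOn_of_forall_continuousAt fun s hs => (hψ s hs).continuousAt))
    (fun s hs => hasDerivAt_neg_rpow_sub_div (hψ s (Ioo_subset_Icc_self hs))
      (hmono (Ioo_subset_Icc_self hs) (right_mem_Icc.2 hct) hs.2) hα.ne')
    (intervalIntegrable_rpow_sub_mul_deriv hct hα hψ hψ' hmono)]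
  simp [Real.zero_rpow hα.ne']

theorem intervalIntegrable_rpow_sub_mul {v : ℝ → ℝ} (hct : c ≤ t) (hα : 0 < α)
    (hψ : ∀ s ∈ Icc c t, HasDerivAt ψ (ψ' s) s) (hψ' : ∀ s ∈ Icc c t, 0 ≤ ψ' s)
    (hmono : StrictMonoOn ψ (Icc c t)) (hv : ContinuousOn v (Icc c t)) :
    IntervalIntegrable (fun s => (ψ t - ψ s) ^ (α - 1) * v s * ψ' s) volume c t := by
  simpa only [mul_right_comm] using (intervalIntegrable_rpow_sub_mul_deriv hct hα hψ hψ'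
    hmono).mul_continuousOn (uIcc_of_le hct ▸ hv)

theorem integral_rpow_sub_mul_le {M : ℝ} (hac : a ≤ c) (hct : c ≤ t) (hα : 0 < α)
    (hψ : ∀ s ∈ Icc a t, HasDerivAt ψ (ψ' s) s) (hψ' : ∀ s ∈ Icc a t, 0 ≤ ψ' s)
    (hmono : StrictMonoOn ψ (Icc a t)) (hu : ContinuousOn u (Icc a t))
    (hzero : ∀ s ∈ Icc a c, u s = 0) (hM : ∀ s ∈ Icc c t, u s ≤ M) :
    ∫ s in a..t, (ψ t - ψ s) ^ (α - 1) * u s * ψ' s ≤ M * ((ψ t - ψ c) ^ α / α) := by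
  have hat := intervalIntegrable_rpow_sub_mul (hac.trans hct) hα hψ hψ' hmono hu
  have hc : c ∈ uIcc a t := mem_uIcc_of_le hac hct
  have hsub : Icc c t ⊆ Icc a t := Icc_subset_Icc_left hac
  calc ∫ s in a..t, (ψ t - ψ s) ^ (α - 1) * u s * ψ' s
      = ∫ s in c..t, (ψ t - ψ s) ^ (α - 1) * u s * ψ' s := by
        rw [← intervalIntegral.integral_add_adjacent_intervals
          (hat.mono_set (uIcc_subset_uIcc left_mem_uIcc hc))
          (hat.mono_set (uIcc_subset_uIcc hc right_mem_uIcc)),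
          intervalIntegral.integral_congr (g := 0) fun s hs => ?_]
        · simp
        · simp [hzero s (uIcc_of_le hac ▸ hs)]
    _ ≤ ∫ s in c..t, M * ((ψ t - ψ s) ^ (α - 1) * ψ' s) := by
        refine intervalIntegral.integral_mono_on hct
          (hat.mono_set (uIcc_subset_uIcc hc right_mem_uIcc))
          ((intervalIntegrable_rpow_sub_mul_deriv hct hα (fun s hs => hψ s (hsub hs))
            (fun s hs => hψ' s (hsub hs)) (hmono.mono hsub)).const_mul M) fun s hs => ?_
        have hker : 0 ≤ (ψ t - ψ s) ^ (α - 1) := Real.rpow_nonneg (sub_nonneg.2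
          (hmono.monotoneOn (hsub hs) (hsub (right_mem_Icc.2 hct)) hs.2)) _
        calc (ψ t - ψ s) ^ (α - 1) * u s * ψ' s ≤ (ψ t - ψ s) ^ (α - 1) * M * ψ' s := by
              gcongr
              exacts [hψ' s (hsub hs), hM s hs]
          _ = M * ((ψ t - ψ s) ^ (α - 1) * ψ' s) := by ring
    _ = M * ((ψ t - ψ c) ^ α / α) := by
        rw [intervalIntegral.integral_const_mul, integral_rpow_sub_mul_deriv hct hα
          (fun s hs => hψ s (hsub hs)) (fun s hs => hψ' s (hsub hs)) (hmono.mono hsub)]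

theorem eq_zero_on_Icc_of_le_integral (hac : a ≤ c) (hα : 0 < α) (hC : 0 ≤ C)
    (hψ : ∀ s ∈ Icc a d, HasDerivAt ψ (ψ' s) s) (hψ' : ∀ s ∈ Icc a d, 0 ≤ ψ' s)
    (hmono : StrictMonoOn ψ (Icc a d))
    (hu : ContinuousOn u (Icc a d)) (hu0 : ∀ t ∈ Icc a d, 0 ≤ u t)
    (hineq : ∀ t ∈ Icc a d, u t ≤ C * ∫ s in a..t, (ψ t - ψ s) ^ (α - 1) * u s * ψ' s)
    (hzero : ∀ t ∈ Icc a c, u t = 0) (hsmall : ∀ t ∈ Icc c d, C * (ψ t - ψ c) ^ α / α < 1) :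
    ∀ t ∈ Icc a d, u t = 0 := by
  intro t ht
  obtain ⟨t₁, ht₁, hmax⟩ := isCompact_Icc.exists_isMaxOn ⟨t, ht⟩ hu
  suffices u t₁ ≤ 0 from le_antisymm ((hmax ht).trans this) (hu0 t ht)
  rcases le_or_gt t₁ c with ht₁c | hct₁
  · exact (hzero t₁ ⟨ht₁.1, ht₁c⟩).le
  have hsub : Icc a t₁ ⊆ Icc a d := Icc_subset_Icc_right ht₁.2
  have hle : u t₁ ≤ u t₁ * (C * (ψ t₁ - ψ c) ^ α / α) :=
    calc u t₁ ≤ C * ∫ s in a..t₁, (ψ t₁ - ψ s) ^ (α - 1) * u s * ψ' s := hineq t₁ ht₁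
      _ ≤ C * (u t₁ * ((ψ t₁ - ψ c) ^ α / α)) := by
          gcongr
          exact integral_rpow_sub_mul_le hac hct₁.le hα (fun s hs => hψ s (hsub hs))
            (fun s hs => hψ' s (hsub hs)) (hmono.mono hsub) (hu.mono hsub) hzero
            fun s hs => hmax (hsub ⟨hac.trans hs.1, hs.2⟩)
      _ = u t₁ * (C * (ψ t₁ - ψ c) ^ α / α) := by ring
  nlinarith [hsmall t₁ ⟨hct₁.le, ht₁.2⟩, hu0 t₁ ht₁]

theorem exists_pos_forall_dist_lt_mul_rpow_sub_lt_one (hψ : ContinuousOn ψ (Icc a b))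
    (hα : 0 < α) (C : ℝ) :
    ∃ δ > 0, ∀ c ∈ Icc a b, ∀ t ∈ Icc a b, dist t c < δ → C * (ψ t - ψ c) ^ α / α < 1 := by
  have hcont : ContinuousAt (fun x : ℝ => C * x ^ α / α) 0 :=
    ((Real.continuousAt_rpow_const 0 α (Or.inr hα.le)).const_mul C).div_const α
  obtain ⟨ε, hε, hball⟩ := Metric.eventually_nhds_iff.1
    (hcont.eventually (gt_mem_nhds (by simp [Real.zero_rpow hα.ne'] : C * 0 ^ α / α < 1)))
  obtain ⟨δ, hδ, hunif⟩ := Metric.uniformContinuousOn_iff.1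
    (isCompact_Icc.uniformContinuousOn_of_continuous hψ) ε hε
  exact ⟨δ, hδ, fun c hc t ht htc => hball (by simpa [Real.dist_eq] using hunif t ht c hc htc)⟩

end

theorem gronwall_uniqueness_psi_general
    (a b : ℝ) (α C : ℝ) (hα : 0 < α) (hC : 0 ≤ C)
    (ψ ψ' : ℝ → ℝ)
    (hψd : ∀ t ∈ Icc a b, HasDerivAt ψ (ψ' t) t)
    (hψ'pos : ∀ t ∈ Icc a b, 0 < ψ' t)
    (hmono : StrictMonoOn ψ (Icc a b))
    (u : ℝ → ℝ) (huc : ContinuousOn u (Icc a b))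
    (hunn : ∀ t ∈ Icc a b, 0 ≤ u t)
    (hineq : ∀ t ∈ Icc a b,
      u t ≤ C * ∫ s in a..t, (ψ t - ψ s) ^ (α - 1) * u s * ψ' s) :
    ∀ t ∈ Icc a b, u t = 0 := by
  intro t ht
  have ha : a ∈ Icc a b := left_mem_Icc.2 (ht.1.trans ht.2)
  obtain ⟨δ, hδ, hsmall⟩ := exists_pos_forall_dist_lt_mul_rpow_sub_lt_one
    (continuousOn_of_forall_continuousAt fun s hs => (hψd s hs).continuousAt) hα C
  refine Icc_subset_of_step (s := {t | u t = 0}) (half_pos hδ) ?_ (fun c hc hzero => ?_) ht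
  · exact le_antisymm (by simpa using hineq a ha) (hunn a ha)
  have hsub : Icc a (min (c + δ / 2) b) ⊆ Icc a b := Icc_subset_Icc_right (min_le_right _ _)
  refine eq_zero_on_Icc_of_le_integral hc.1 hα hC (fun s hs => hψd s (hsub hs))
    (fun s hs => (hψ'pos s (hsub hs)).le) (hmono.mono hsub) (huc.mono hsub)
    (fun s hs => hunn s (hsub hs)) (fun s hs => hineq s (hsub hs)) hzero fun s hs => ?_
  refine hsmall c hc s (hsub ⟨hc.1.trans hs.1, hs.2⟩) ?_
  rw [Real.dist_eq, abs_of_nonneg (sub_nonneg.2 hs.1)]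
  linarith [hs.2.trans (min_le_left _ _)]

/-- Gronwall-type uniqueness consequence: if a continuous non-negative `u` satisfies
`u(t) ≤ C ∫ₐᵗ (ψ(t)−ψ(s))^{α−1} u(s) ψ'(s) ds`, then `u ≡ 0` on `[a,b]`. -/
theorem gronwall_uniqueness_psi
    (a b : ℝ) (hab : a ≤ b) (α C : ℝ) (hα : 0 < α) (hC : 0 ≤ C)
    (ψ ψ' : ℝ → ℝ)
    (hψd : ∀ t ∈ Icc a b, HasDerivAt ψ (ψ' t) t)
    (hψ'c : ContinuousOn ψ' (Icc a b))
    (hψ'pos : ∀ t ∈ Icc a b, 0 < ψ' t)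
    (hmono : StrictMonoOn ψ (Icc a b))
    (u : ℝ → ℝ) (huc : ContinuousOn u (Icc a b))
    (hunn : ∀ t ∈ Icc a b, 0 ≤ u t)
    (hineq : ∀ t ∈ Icc a b,
      u t ≤ C * ∫ s in a..t, (ψ t - ψ s) ^ (α - 1) * u s * ψ' s) :
    ∀ t ∈ Icc a b, u t = 0 :=
  gronwall_uniqueness_psi_general a b α C hα hC ψ ψ' hψd hψ'pos hmono u huc hunn hineq
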